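/- The coefficients of Φ satisfy φ_0 = 1 and, for every integer k ≥ 1, k·φ_k = α·φ_{k−1} + (k−1)·β·φ_{k−2} + 2γ·φ_{k−3} (with the convention φ_j := 0 for j < 0). Equivalently, for every integer g ≥ 1, Φ^{(g+3)} = α·Φ^{(g+2)} + (g+2)²·β·Φ^{(g+1)} + 2(g+1)(g+2)·γ·Φ^{(g)}. -/

import Mathlib

noncomputable section

open PowerSeries

/-- The polynomial ring `ℚ[α,β,γ]`. -/
abbrev R3 : Type := MvPolynomial (Fin 3) ℚ

/-- The fraction field `K = ℚ(α,β,γ)`. -/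
abbrev K3 : Type := FractionRing R3

/-- The image of `α` in `K`. -/
def al : K3 := algebraMap R3 K3 (MvPolynomial.X 0)
/-- The image of `β` in `K`. -/
def be : K3 := algebraMap R3 K3 (MvPolynomial.X 1)
/-- The image of `γ` in `K`. -/
def ga : K3 := algebraMap R3 K3 (MvPolynomial.X 2)

/-- The binomial series `(1 - β t²)^{-1/2} = ∑_{n≥0} C(2n,n) (β t²/4)^n`. -/
def Sq : PowerSeries K3 :=
  PowerSeries.mk fun k => if k % 2 = 0 then
    ((k.choose (k / 2) : ℚ) : K3) * (be / 4) ^ (k / 2) else 0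

/-- The exponent `E(t) = α t + (α + 2γ/β) ∑_{m≥1} β^m t^{2m+1}/(2m+1)`;
its coefficient in degree `k = 2m+1 ≥ 3` is `(α + 2γ/β) β^{(k-1)/2} / k`. -/
def Ex : PowerSeries K3 :=
  PowerSeries.mk fun k =>
    if k = 1 then al
    else if k % 2 = 1 then (al + 2 * ga / be) * be ^ ((k - 1) / 2) / (k : K3)
    else 0

/-- The formal exponential `exp E = ∑_n E^n/n!` of the power series `E`
(which has zero constant term, so each coefficient is a finite sum). -/
def ExpEx : PowerSeries K3 :=
  PowerSeries.mk fun k =>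
    ∑ n ∈ Finset.range (k + 1), PowerSeries.coeff k (Ex ^ n) / (n.factorial : K3)

/-- The generating function `Φ(t) = (1 - βt²)^{-1/2} exp(E(t))`. -/
def Phi : PowerSeries K3 := Sq * ExpEx

/-- `φ_k`, the `k`-th coefficient of `Φ`. -/
def phi (k : ℕ) : K3 := PowerSeries.coeff k Phi

/-- `Φ^{(r)} = r! φ_r`, the `r`-th formal derivative of `Φ` at `t = 0`. -/
def PhiD (r : ℕ) : K3 := (r.factorial : K3) * phi r

/-- `f_1^g := Φ^{(g)}`. -/
def f1 (g : ℕ) : K3 := PhiD g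
/-- `f_2^g := (1/g²)(Φ^{(g+1)} - α Φ^{(g)})`. -/
def f2 (g : ℕ) : K3 := (1 / (g : K3) ^ 2) * (PhiD (g + 1) - al * PhiD g)
/-- `f_3^g := (1/(2g(g+1)))(Φ^{(g+2)} - α Φ^{(g+1)} - (g+1)² β Φ^{(g)})`. -/
def f3 (g : ℕ) : K3 :=
  (1 / (2 * (g : K3) * ((g : K3) + 1))) *
    (PhiD (g + 2) - al * PhiD (g + 1) - ((g : K3) + 1) ^ 2 * be * PhiD g)

lemma be_ne : be ≠ 0 := by
  simp [be, IsFractionRing.to_map_eq_zero_iff, MvPolynomial.X_ne_zero]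

lemma sq_coeff (k : ℕ) : coeff k Sq =
    if k % 2 = 0 then ((k.choose (k / 2) : ℚ) : K3) * (be / 4) ^ (k / 2) else 0 :=
  coeff_mk _ _

lemma hL1 : derivative K3 Sq - C be * (derivative K3 Sq) * X ^ 2
    - C be * Sq * X ^ 1 = 0 := by
  ext n
  simp only [map_sub, coeff_mul_X_pow', coeff_C_mul, coeff_derivative, sq_coeff, map_zero]
  rcases Nat.even_or_odd n with ⟨m, rfl⟩ | ⟨m, rfl⟩
  · rcases m with _ | r
    · norm_num
    · have h1 : (r + 1 + (r + 1) + 1) % 2 = 1 := by omega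
      have h2 : (r + 1 + (r + 1) - 1) % 2 = 1 := by omega
      have h3 : (r + 1 + (r + 1) - 2 + 1) % 2 = 1 := by omega
      simp [h1, h2, h3, show (r + 1 + r) % 2 = 1 from by omega]
  · rcases m with _ | r
    · norm_num [show ((2:ℕ).choose 1 : ℚ) = 2 from by decide]
      ring
    · simp only [show 2 * (r + 1) + 1 + 1 = 2 * r + 4 from by ring,
        show 2 * (r + 1) + 1 - 2 + 1 = 2 * r + 2 from by omega,
        show 2 * (r + 1) + 1 - 2 = 2 * r + 1 from by omega,
        show 2 * (r + 1) + 1 - 1 = 2 * r + 2 from by omega]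
      simp only [show 2 * (r + 1) + 1 = 2 * r + 3 from by ring,
        show 2 * r + 1 + 1 = 2 * r + 2 from by omega]
      simp only [show (2 * r + 4) / 2 = r + 2 from by omega,
        show (2 * r + 2) / 2 = r + 1 from by omega,
        show ((2 * r + 4) % 2 = 0) = True from eq_true (by omega),
        show ((2 * r + 2) % 2 = 0) = True from eq_true (by omega),
        show (2 ≤ 2 * r + 3) = True from eq_true (by omega),
        show (1 ≤ 2 * r + 3) = True from eq_true (by omega), if_true]
      have keyK : (((2 * r + 4).choose (r + 2) : ℚ) : K3) * (2 * r + 4) =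
          4 * (2 * r + 3) * (((2 * r + 2).choose (r + 1) : ℚ) : K3) := by
        have h := Nat.succ_mul_centralBinom_succ (r + 1)
        simp only [Nat.centralBinom, show 2 * (r + 2) = 2 * r + 4 from by ring,
          show 2 * (r + 1) = 2 * r + 2 from by ring] at h
        have h2 : ((r + 2) * ((2 * r + 4).choose (r + 2)) : K3) =
            (2 * (2 * (r + 1) + 1)) * ((2 * r + 2).choose (r + 1) : K3) := by
          exact_mod_cast congrArg (Nat.cast (R := K3)) h
        push_cast at h2 ⊢
        linear_combination 2 * h2
      push_cast at keyK
      set x : K3 := be / 4 with hx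
      have hbe : be = 4 * x := by rw [hx]; field_simp
      push_cast
      rw [hbe]
      linear_combination (x ^ (r + 1) * x) * keyK

lemma ex_coeff (k : ℕ) : coeff k Ex = if k = 1 then al
    else if k % 2 = 1 then (al + 2 * ga / be) * be ^ ((k - 1) / 2) / (k : K3) else 0 :=
  coeff_mk _ _

lemma hL2 : derivative K3 Ex - C al - C (2 * ga) * X ^ 2
    - C be * (derivative K3 Ex) * X ^ 2 = 0 := by
  have h25 : ∀ j : ℕ, ((j : K3) ≠ 0) ∨ j = 0 := fun j => by
    rcases Nat.eq_zero_or_pos j with h | h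
    · exact Or.inr h
    · exact Or.inl (Nat.cast_ne_zero.mpr (by omega))
  ext n
  simp only [map_sub, coeff_mul_X_pow', coeff_C_mul, coeff_derivative, ex_coeff, coeff_C,
    map_zero]
  rcases Nat.even_or_odd n with ⟨m, rfl⟩ | ⟨m, rfl⟩
  · rcases m with _ | _ | r
    · norm_num
    · norm_num
      field_simp [be_ne]
      ring
    · simp only [show r + 2 + (r + 2) - 2 = 2 * r + 2 from by omega]
      simp only [show r + 2 + (r + 2) = 2 * r + 4 from by omega]
      simp only [show 2 * r + 2 + 1 = 2 * r + 3 from by omega,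
        show 2 * r + 4 + 1 = 2 * r + 5 from by omega,
        show 2 * r + 4 - 2 = 2 * r + 2 from by omega]
      simp only [show (2 * r + 5 = 1) = False from eq_false (by omega),
        show (2 * r + 3 = 1) = False from eq_false (by omega),
        show (2 * r + 4 = 0) = False from eq_false (by omega),
        show (2 * r + 4 = 2) = False from eq_false (by omega),
        show ((2 * r + 5) % 2 = 1) = True from eq_true (by omega),
        show ((2 * r + 3) % 2 = 1) = True from eq_true (by omega),
        show (2 ≤ 2 * r + 4) = True from eq_true (by omega),
        show (2 * r + 5 - 1) / 2 = r + 2 from by omega,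
        show (2 * r + 3 - 1) / 2 = r + 1 from by omega, if_true, if_false]
      have h5 : ((2 * r + 5 : ℕ) : K3) ≠ 0 := Nat.cast_ne_zero.mpr (by omega)
      have h3 : ((2 * r + 3 : ℕ) : K3) ≠ 0 := Nat.cast_ne_zero.mpr (by omega)
      push_cast at h5 h3 ⊢
      field_simp
      ring
  · rcases m with _ | r
    · norm_num
    · simp only [show 2 * (r + 1) + 1 - 2 = 2 * r + 1 from by omega]
      simp only [show 2 * (r + 1) + 1 = 2 * r + 3 from by omega]
      simp only [show 2 * r + 1 + 1 = 2 * r + 2 from by omega,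
        show 2 * r + 3 + 1 = 2 * r + 4 from by omega,
        show 2 * r + 3 - 2 = 2 * r + 1 from by omega]
      simp only [show (2 * r + 4 = 1) = False from eq_false (by omega),
        show (2 * r + 2 = 1) = False from eq_false (by omega),
        show (2 * r + 3 = 0) = False from eq_false (by omega),
        show (2 * r + 3 = 2) = False from eq_false (by omega),
        show ((2 * r + 4) % 2 = 1) = False from eq_false (by omega),
        show ((2 * r + 2) % 2 = 1) = False from eq_false (by omega),
        show (2 ≤ 2 * r + 3) = True from eq_true (by omega), if_true, if_false]
      norm_num

lemma constExp : constantCoeff Ex = 0 := by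
  simp [Ex, coeff_zero_eq_constantCoeff.symm, coeff_mk]

lemma coeff_Ex_pow {b j : ℕ} (h : b < j) : coeff b (Ex ^ j) = 0 := by
  have hX : (X : PowerSeries K3) ∣ Ex := X_dvd_iff.mpr constExp
  exact X_pow_dvd_iff.mp (pow_dvd_pow_of_dvd hX j) b h

lemma expex_coeff (k : ℕ) : coeff k ExpEx =
    ∑ n ∈ Finset.range (k + 1), coeff k (Ex ^ n) / (n.factorial : K3) :=
  coeff_mk _ _

lemma hL3 : derivative K3 ExpEx = (derivative K3 Ex) * ExpEx := by
  ext n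
  have key : ∀ j : ℕ, coeff (n + 1) (Ex ^ (j + 1)) * ((n : K3) + 1) =
      ((j : K3) + 1) * coeff n (Ex ^ j * derivative K3 Ex) := by
    intro j
    have h := congrArg (coeff n) (Derivation.leibniz_pow (a := Ex) (derivative K3) (j + 1))
    rw [coeff_derivative] at h
    rw [map_nsmul] at h
    rw [nsmul_eq_mul] at h
    simp only [smul_eq_mul] at h
    push_cast at h
    exact h
  have hLHS : coeff n (derivative K3 ExpEx) =
      ∑ j ∈ Finset.range (n + 1), coeff n (Ex ^ j * derivative K3 Ex) / (j.factorial : K3) := by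
    rw [coeff_derivative, expex_coeff, Finset.sum_mul, Finset.sum_range_succ']
    have h0 : coeff (n + 1) (Ex ^ 0) / ((Nat.factorial 0 : ℕ) : K3) * ((n : K3) + 1) = 0 := by
      simp [coeff_one]
    rw [h0, add_zero]
    refine Finset.sum_congr rfl fun i _ => ?_
    have hi1 : ((i : K3) + 1) ≠ 0 := by
      have : ((i + 1 : ℕ) : K3) ≠ 0 := Nat.cast_ne_zero.mpr (by omega)
      push_cast at this; exact this
    calc coeff (n + 1) (Ex ^ (i + 1)) / (((i + 1).factorial : ℕ) : K3) * ((n : K3) + 1)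
        = coeff (n + 1) (Ex ^ (i + 1)) * ((n : K3) + 1) / (((i + 1).factorial : ℕ) : K3) := by
          ring
      _ = (((i : K3) + 1) * coeff n (Ex ^ i * derivative K3 Ex)) /
          (((i : K3) + 1) * ((i.factorial : ℕ) : K3)) := by
          rw [key i, Nat.factorial_succ]; push_cast; ring_nf
      _ = coeff n (Ex ^ i * derivative K3 Ex) / ((i.factorial : ℕ) : K3) :=
          mul_div_mul_left _ _ hi1
  have hRHS : coeff n ((derivative K3 Ex) * ExpEx) =
      ∑ j ∈ Finset.range (n + 1), coeff n (Ex ^ j * derivative K3 Ex) / (j.factorial : K3) := by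
    rw [coeff_mul]
    have h1 : ∀ p ∈ Finset.HasAntidiagonal.antidiagonal n,
        coeff p.1 (derivative K3 Ex) * coeff p.2 ExpEx =
        ∑ j ∈ Finset.range (n + 1),
          coeff p.1 (derivative K3 Ex) * (coeff p.2 (Ex ^ j) / (j.factorial : K3)) := by
      intro p hp
      rw [expex_coeff, Finset.mul_sum]
      refine Finset.sum_subset (Finset.range_subset_range.mpr ?_) fun j _ hj => ?_
      · have := Finset.HasAntidiagonal.mem_antidiagonal.mp hp; omega
      · have hlt : p.2 < j := by simp only [Finset.mem_range] at hj; omega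
        rw [coeff_Ex_pow hlt, zero_div, mul_zero]
    rw [Finset.sum_congr rfl h1, Finset.sum_comm]
    refine Finset.sum_congr rfl fun j _ => ?_
    rw [mul_comm (Ex ^ j), coeff_mul, Finset.sum_div]
    exact Finset.sum_congr rfl fun p _ => (mul_div_assoc _ _ _).symm
  rw [hLHS, hRHS]

lemma hODE : derivative K3 Phi - C be * (derivative K3 Phi) * X ^ 2
    = C al * Phi + C be * Phi * X ^ 1 + C (2 * ga) * Phi * X ^ 2 := by
  have hd : derivative K3 Phi = (derivative K3 Sq) * ExpEx + Sq * ((derivative K3 Ex) * ExpEx) := by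
    rw [Phi, Derivation.leibniz, hL3]; simp only [smul_eq_mul]; ring
  have hP : Phi = Sq * ExpEx := rfl
  linear_combination ExpEx * hL1 + Sq * ExpEx * hL2 + (1 - C be * X ^ 2) * hd
    - (C al + C be * X ^ 1 + C (2 * ga) * X ^ 2) * hP

lemma phi_eq (k : ℕ) : coeff k Phi = phi k := rfl

lemma rec_nat (n : ℕ) :
    phi (n + 1) * ((n : K3) + 1) =
      al * phi n + (if 1 ≤ n then be * phi (n - 1) else 0)
        + (if 2 ≤ n then 2 * ga * phi (n - 2) else 0)
        + (if 2 ≤ n then be * phi (n - 1) * ((n : K3) - 1) else 0) := by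
  have h := congrArg (coeff n) hODE
  simp only [map_add, map_sub, coeff_mul_X_pow', coeff_C_mul, coeff_derivative, phi_eq] at h
  rcases n with _ | _ | r
  · simpa using h
  · simp only [show ¬ (2 ≤ 1) from by omega, show (1:ℕ) - 1 = 0 from rfl,
      show (1:ℕ) ≤ 1 from le_refl 1, if_true, if_false, if_pos, if_neg] at h ⊢
    linear_combination h
  · simp only [show (2 ≤ r + 2) = True from eq_true (by omega),
      show (1 ≤ r + 2) = True from eq_true (by omega),
      show r + 2 - 1 = r + 1 from by omega, show r + 2 - 2 = r from by omega,
      show r + 2 - 2 + 1 = r + 1 from by omega, if_true] at h ⊢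
    push_cast at h ⊢
    linear_combination h

lemma phi_zero : phi 0 = 1 := by
  have : coeff 0 Phi = coeff 0 Sq * coeff 0 ExpEx := by
    rw [Phi, coeff_mul]
    simp
  rw [← phi_eq, this, sq_coeff, expex_coeff]
  norm_num

/-- `φ_0 = 1` and for every `k ≥ 1` one has
`k φ_k = α φ_{k-1} + (k-1) β φ_{k-2} + 2 γ φ_{k-3}` (with `φ_j := 0` for
`j < 0`); equivalently, for every `g ≥ 1`,
`Φ^{(g+3)} = α Φ^{(g+2)} + (g+2)² β Φ^{(g+1)} + 2(g+1)(g+2) γ Φ^{(g)}`. -/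
theorem statement2 (phiZ : ℤ → K3)
    (hphiZ : ∀ j : ℤ, phiZ j = if 0 ≤ j then phi j.toNat else 0) :
    (phiZ 0 = 1 ∧
      ∀ k : ℤ, 1 ≤ k →
        (k : K3) * phiZ k =
          al * phiZ (k - 1) + ((k : K3) - 1) * be * phiZ (k - 2) +
            2 * ga * phiZ (k - 3)) ∧
    ∀ g : ℕ, 1 ≤ g →
      PhiD (g + 3) =
        al * PhiD (g + 2) + ((g : K3) + 2) ^ 2 * be * PhiD (g + 1) +
          2 * ((g : K3) + 1) * ((g : K3) + 2) * ga * PhiD g := by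
  refine ⟨⟨?_, ?_⟩, ?_⟩
  · rw [hphiZ 0]
    simp [phi_zero]
  · intro k hk
    obtain ⟨n, rfl⟩ : ∃ n : ℕ, k = (n : ℤ) := ⟨k.toNat, (Int.toNat_of_nonneg (by omega)).symm⟩
    have hn : 1 ≤ n := by exact_mod_cast hk
    obtain ⟨m, rfl⟩ : ∃ m, n = m + 1 := ⟨n - 1, by omega⟩
    have h := rec_nat m
    rcases m with _ | _ | r
    · simp only [show ((0 + 1 : ℕ) : ℤ) = 1 from by norm_num] at *
      rw [hphiZ, hphiZ, hphiZ, hphiZ]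
      norm_num at h ⊢
      linear_combination h
    · simp only [show ((1 + 1 : ℕ) : ℤ) = 2 from by norm_num] at *
      rw [hphiZ, hphiZ, hphiZ, hphiZ]
      norm_num [show ((2:ℤ).toNat) = 2 from rfl] at h ⊢
      linear_combination h
    · have e0 : ((r + 2 + 1 : ℕ) : ℤ) = ((r + 3 : ℕ) : ℤ) := by push_cast; ring
      have e1 : ((r + 3 : ℕ) : ℤ) - 1 = ((r + 2 : ℕ) : ℤ) := by push_cast; ring
      have e2 : ((r + 3 : ℕ) : ℤ) - 2 = ((r + 1 : ℕ) : ℤ) := by push_cast; ring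
      have e3 : ((r + 3 : ℕ) : ℤ) - 3 = ((r : ℕ) : ℤ) := by push_cast; ring
      rw [e0, e1, e2, e3, hphiZ, hphiZ, hphiZ, hphiZ]
      simp only [Int.toNat_natCast, if_pos (Int.natCast_nonneg _)]
      simp only [show (2 ≤ r + 2) = True from eq_true (by omega),
        show (1 ≤ r + 2) = True from eq_true (by omega),
        show r + 2 - 1 = r + 1 from by omega, show r + 2 - 2 = r from by omega,
        if_true] at h
      push_cast at h ⊢
      linear_combination h
  · intro g _
    have h := rec_nat (g + 2)
    simp only [show (2 ≤ g + 2) = True from eq_true (by omega),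
      show (1 ≤ g + 2) = True from eq_true (by omega),
      show g + 2 - 1 = g + 1 from by omega, show g + 2 - 2 = g from by omega,
      if_true] at h
    simp only [PhiD, show g + 2 + 1 = g + 3 from rfl]
    rw [show g + 3 = (g + 2) + 1 from rfl, Nat.factorial_succ,
      show g + 2 = (g + 1) + 1 from rfl, Nat.factorial_succ,
      show g + 1 = g + 1 from rfl, Nat.factorial_succ g]
    push_cast at h ⊢
    linear_combination (((g : K3) + 2) * ((g : K3) + 1) * (g.factorial : K3)) * h
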